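/- Let α₂ ∈ L¹(Ω) ∩ W^{−1,p'}(Ω) with α₂ ≥ 0. Then lim_{k→∞} ‖χ_{{α₂ ≥ k}} α₂‖_{W^{−1,p'}(Ω)} = 0. -/

import Mathlib

/-!
Since the truncations `1_{α ≥ k} α ≥ 0` decrease in `k`, it suffices to find for each `ε > 0` a
level `K` with `∫ 1_{α ≥ K} α |v| ≤ ε` for every unit test function `v`. If there were none, every
level `K` would have a test function `v_K` with `∫ 1_{α ≥ K} α |v_K| > ε`; since `α ∈ L¹`, levels
`K₀ ≤ K₁ ≤ …` can be chosen so that `v_i := v_{K_i}` keeps mass `ε / 2` on its own band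
`K_i ≤ α < K_{i+1}`. A smoothed `ℓ^p` envelope `w ≈ (∑_{i<J} |v_i| ^ p) ^ (1/p)` dominates every
`|v_i|`, so `∫ α w ≳ J ε / 2`; but the chain rule and Hölder give `|∇w| ^ p ≤ ∑ |∇v_i| ^ p`, so
`J ^ (-1/p) w` is again a unit test function and `∫ α w ≤ J ^ (1/p) M`. As `p > 1`, this fails
for large `J`.
-/

open MeasureTheory Filter Topology Set

noncomputable section

/-- The `W^{-1,p'}(Ω)` norm of a locally integrable function `f`, defined by duality
against smooth functions with compact support in `Ω`, normalized by `‖∇v‖_p ≤ 1`. -/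
def dualNorm {N : ℕ} (p : ℝ) (Ω : Set (EuclideanSpace ℝ (Fin N)))
    (f : EuclideanSpace ℝ (Fin N) → ℝ) : ℝ :=
  sSup {r : ℝ | ∃ v : EuclideanSpace ℝ (Fin N) → ℝ,
    ContDiff ℝ (⊤ : ℕ∞) v ∧ HasCompactSupport v ∧ tsupport v ⊆ Ω ∧
    (∫ x in Ω, ‖gradient v x‖ ^ p) ≤ 1 ∧ r = ∫ x in Ω, f x * v x}

open scoped ENNReal

theorem sum_rpow_sub_one_mul_le {ι : Type*} (s : Finset ι) {p : ℝ} (hp : 1 < p) {a c : ι → ℝ}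
    (ha : ∀ i ∈ s, 0 ≤ a i) (hc : ∀ i ∈ s, 0 ≤ c i) :
    ∑ i ∈ s, a i ^ (p - 1) * c i ≤ (∑ i ∈ s, a i ^ p) ^ (1 - p⁻¹) * (∑ i ∈ s, c i ^ p) ^ p⁻¹ := by
  have hpq := (Real.HolderConjugate.conjExponent hp).symm
  have hp1 : p - 1 ≠ 0 := by linarith
  have key := Real.inner_le_Lp_mul_Lq_of_nonneg s hpq
    (fun i hi => Real.rpow_nonneg (ha i hi) (p - 1)) hc
  have hpow : ∀ i ∈ s, (a i ^ (p - 1)) ^ p.conjExponent = a i ^ p := fun i hi => by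
    rw [← Real.rpow_mul (ha i hi), Real.conjExponent]
    field_simp
  rwa [Finset.sum_congr rfl hpow, Real.conjExponent, one_div_div, one_div,
    show (p - 1) / p = 1 - p⁻¹ by field_simp] at key

theorem sum_sub_mul_le_mul {t g : ℕ → ℝ} {a h : ℝ} {J : ℕ} (ht : Antitone t) (htJ : 0 ≤ t J)
    (ht0 : t 0 ≤ a) (hg : ∀ i < J, g i ≤ h) (hh : 0 ≤ h) :
    ∑ i ∈ Finset.range J, (t i - t (i + 1)) * g i ≤ a * h :=
  calc ∑ i ∈ Finset.range J, (t i - t (i + 1)) * g i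
      ≤ ∑ i ∈ Finset.range J, (t i - t (i + 1)) * h :=
        Finset.sum_le_sum fun i hi => mul_le_mul_of_nonneg_left
          (hg i (Finset.mem_range.1 hi)) (sub_nonneg.2 (ht (Nat.le_succ i)))
    _ = (t 0 - t J) * h := by rw [← Finset.sum_mul, Finset.sum_range_sub']
    _ ≤ a * h := mul_le_mul_of_nonneg_right (by linarith) hh

theorem eventually_rpow_inv_mul_add_lt_mul {p : ℝ} (hp : 1 < p) (M c : ℝ) {ε : ℝ}
    (hε : 0 < ε) : ∀ᶠ n : ℕ in atTop, (n : ℝ) ^ p⁻¹ * M + c < n * ε := by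
  have hp0 : p ≠ 0 := by positivity
  have hexp : 0 < 1 - p⁻¹ := sub_pos.2 (inv_lt_one_of_one_lt₀ hp)
  have hlim : Tendsto (fun n : ℕ => (n : ℝ) ^ (-(1 - p⁻¹)) * M + c / n) atTop (𝓝 0) := by
    have h1 := ((tendsto_rpow_neg_atTop hexp).comp tendsto_natCast_atTop_atTop).mul_const M
    simpa using h1.add (tendsto_const_div_atTop_nhds_zero_nat c)
  filter_upwards [hlim.eventually (gt_mem_nhds hε), eventually_gt_atTop 0] with n hn hn0
  have hn0' : (0 : ℝ) < n := Nat.cast_pos.2 hn0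
  have hsplit : (n : ℝ) ^ p⁻¹ = n * (n : ℝ) ^ (-(1 - p⁻¹)) := by
    rw [← Real.rpow_one_add' hn0'.le (by simp [hp0])]
    ring_nf
  calc (n : ℝ) ^ p⁻¹ * M + c = n * ((n : ℝ) ^ (-(1 - p⁻¹)) * M + c / n) := by
        rw [hsplit]; field_simp
    _ < n * ε := mul_lt_mul_of_pos_left hn hn0'

theorem exists_monotone_chain {α : Type*} [Preorder α] [Nonempty α] {P : α → α → Prop}
    (h : ∀ a, ∃ b, a ≤ b ∧ P a b) : ∃ K : ℕ → α, Monotone K ∧ ∀ i, P (K i) (K (i + 1)) := by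
  choose next hle hP using h
  refine ⟨fun i => next^[i] (Classical.arbitrary α), monotone_nat_of_le_succ fun i => ?_,
    fun i => ?_⟩
  · rw [Function.iterate_succ_apply']
    exact hle _
  · simp only [Function.iterate_succ_apply']
    exact hP _

def smoothAbs (δ t : ℝ) : ℝ := √(t ^ 2 + δ ^ 2)

section smoothAbs

variable {δ : ℝ}

theorem smoothAbs_nonneg (t : ℝ) : 0 ≤ smoothAbs δ t := Real.sqrt_nonneg _

theorem smoothAbs_pos (hδ : δ ≠ 0) (t : ℝ) : 0 < smoothAbs δ t :=
  Real.sqrt_pos.2 (by positivity)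

theorem abs_le_smoothAbs (t : ℝ) : |t| ≤ smoothAbs δ t :=
  Real.abs_le_sqrt (by nlinarith)

theorem smoothAbs_zero : smoothAbs δ 0 = |δ| := by
  simp [smoothAbs, Real.sqrt_sq_eq_abs]

theorem hasDerivAt_smoothAbs (hδ : δ ≠ 0) (t : ℝ) :
    HasDerivAt (smoothAbs δ) (t / smoothAbs δ t) t := by
  refine (((hasDerivAt_pow 2 t).add_const (δ ^ 2)).sqrt (by positivity)).congr_deriv ?_
  rw [smoothAbs]
  field_simp
  norm_num

theorem abs_div_smoothAbs_le_one (t : ℝ) : |t / smoothAbs δ t| ≤ 1 := by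
  rw [abs_div, abs_of_nonneg (smoothAbs_nonneg t)]
  exact div_le_one_of_le₀ (abs_le_smoothAbs t) (smoothAbs_nonneg t)

theorem contDiff_smoothAbs (hδ : δ ≠ 0) : ContDiff ℝ ⊤ (smoothAbs δ) :=
  ((contDiff_id.pow 2).add contDiff_const).sqrt fun t => by positivity

end smoothAbs

/-- `smoothAbs δ` with `δ ≠ 0` keeps the sum away from `0`, where `(·) ^ p⁻¹` is not smooth. -/
def lpEnvelope {ι X : Type*} (p δ : ℝ) (s : Finset ι) (v : ι → X → ℝ) (x : X) : ℝ :=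
  (∑ i ∈ s, smoothAbs δ (v i x) ^ p) ^ p⁻¹ - (∑ _i ∈ s, smoothAbs δ 0 ^ p) ^ p⁻¹

namespace lpEnvelope

section General

variable {ι X : Type*} {p δ : ℝ} {s : Finset ι} {v : ι → X → ℝ}

theorem eq_zero {x : X} (h : ∀ i ∈ s, v i x = 0) : lpEnvelope p δ s v x = 0 := by
  rw [lpEnvelope, Finset.sum_congr rfl fun i hi => congrArg (smoothAbs δ · ^ p) (h i hi),
    sub_self]

theorem tsupport_subset [TopologicalSpace X] :
    tsupport (lpEnvelope p δ s v) ⊆ ⋃ i ∈ s, tsupport (v i) :=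
  closure_minimal (fun _ hx => by_contra fun hxs => hx <| eq_zero fun _ hi =>
      image_eq_zero_of_notMem_tsupport fun hxi => hxs (mem_biUnion hi hxi))
    (s.finite_toSet.isClosed_biUnion fun _ _ => isClosed_tsupport _)

theorem hasCompactSupport [TopologicalSpace X] (hv : ∀ i ∈ s, HasCompactSupport (v i)) :
    HasCompactSupport (lpEnvelope p δ s v) :=
  (s.finite_toSet.isCompact_biUnion hv).of_isClosed_subset (isClosed_tsupport _) tsupport_subset

theorem abs_le_add (hp : 0 < p) {i : ι} (hi : i ∈ s) (x : X) :
    |v i x| ≤ lpEnvelope p δ s v x + (s.card : ℝ) ^ p⁻¹ * |δ| := by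
  have hterm : smoothAbs δ (v i x) ≤ (∑ j ∈ s, smoothAbs δ (v j x) ^ p) ^ p⁻¹ :=
    calc smoothAbs δ (v i x) = (smoothAbs δ (v i x) ^ p) ^ p⁻¹ :=
          (Real.rpow_rpow_inv (smoothAbs_nonneg _) hp.ne').symm
      _ ≤ _ := Real.rpow_le_rpow (Real.rpow_nonneg (smoothAbs_nonneg _) p)
          (Finset.single_le_sum (f := fun j => smoothAbs δ (v j x) ^ p)
            (fun j _ => Real.rpow_nonneg (smoothAbs_nonneg _) p) hi)
          (inv_nonneg.2 hp.le)
  have hconst : (∑ _j ∈ s, smoothAbs δ 0 ^ p) ^ p⁻¹ = (s.card : ℝ) ^ p⁻¹ * |δ| := by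
    rw [Finset.sum_const, nsmul_eq_mul, smoothAbs_zero,
      Real.mul_rpow (Nat.cast_nonneg _) (Real.rpow_nonneg (abs_nonneg δ) p),
      Real.rpow_rpow_inv (abs_nonneg δ) hp.ne']
  rw [lpEnvelope, hconst]
  linarith [abs_le_smoothAbs (δ := δ) (v i x)]

theorem sum_rpow_smoothAbs_pos (hδ : δ ≠ 0) (hs : s.Nonempty) (x : X) :
    0 < ∑ i ∈ s, smoothAbs δ (v i x) ^ p :=
  Finset.sum_pos (fun _ _ => Real.rpow_pos_of_pos (smoothAbs_pos hδ _) p) hs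

end General

variable {ι F : Type*} [NormedAddCommGroup F] [NormedSpace ℝ F] {p δ : ℝ} {s : Finset ι}
  {v : ι → F → ℝ}

theorem contDiff (hδ : δ ≠ 0) (hs : s.Nonempty) {n : WithTop ℕ∞}
    (hv : ∀ i ∈ s, ContDiff ℝ n (v i)) : ContDiff ℝ n (lpEnvelope p δ s v) := by
  have hsum : ContDiff ℝ n fun x => ∑ i ∈ s, smoothAbs δ (v i x) ^ p :=
    ContDiff.sum fun i hi =>
      (((contDiff_smoothAbs hδ).of_le le_top).comp (hv i hi)).rpow_const_of_ne
        fun x => (smoothAbs_pos hδ _).ne'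
  exact (hsum.rpow_const_of_ne fun x => (sum_rpow_smoothAbs_pos hδ hs x).ne').sub contDiff_const

theorem norm_fderiv_le (hp : 1 < p) (hδ : δ ≠ 0) (hs : s.Nonempty) {x : F}
    (hv : ∀ i ∈ s, DifferentiableAt ℝ (v i) x) :
    ‖fderiv ℝ (lpEnvelope p δ s v) x‖ ≤ (∑ i ∈ s, ‖fderiv ℝ (v i) x‖ ^ p) ^ p⁻¹ := by
  set a : ι → ℝ := fun i => smoothAbs δ (v i x)
  set L : ι → F →L[ℝ] ℝ := fun i => fderiv ℝ (v i) x
  set T := ∑ i ∈ s, a i ^ p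
  have ha : ∀ i, 0 < a i := fun i => smoothAbs_pos hδ _
  have hT : 0 < T := sum_rpow_smoothAbs_pos hδ hs x
  have hp0 : 0 < p := by linarith
  have hderiv : HasFDerivAt (lpEnvelope p δ s v)
      ((p⁻¹ * T ^ (p⁻¹ - 1)) • ∑ i ∈ s, (p * a i ^ (p - 1)) • (v i x / a i) • L i) x := by
    have hterm : ∀ i ∈ s, HasFDerivAt (fun y => smoothAbs δ (v i y) ^ p)
        ((p * a i ^ (p - 1)) • (v i x / a i) • L i) x := fun i hi =>
      ((hasDerivAt_smoothAbs hδ _).comp_hasFDerivAt x (hv i hi).hasFDerivAt).rpow_const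
        (Or.inl (ha i).ne')
    exact ((HasFDerivAt.fun_sum hterm).rpow_const (Or.inl hT.ne')).sub_const _
  calc ‖fderiv ℝ (lpEnvelope p δ s v) x‖
      ≤ (p⁻¹ * T ^ (p⁻¹ - 1)) * ∑ i ∈ s, (p * a i ^ (p - 1)) * ‖L i‖ := by
        rw [hderiv.fderiv, norm_smul, Real.norm_of_nonneg (by positivity)]
        gcongr
        refine (norm_sum_le _ _).trans (Finset.sum_le_sum fun i _ => ?_)
        rw [norm_smul, norm_smul, Real.norm_of_nonneg (by have := ha i; positivity),
          Real.norm_eq_abs]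
        exact mul_le_mul_of_nonneg_left
          (mul_le_of_le_one_left (norm_nonneg _) (abs_div_smoothAbs_le_one _))
          (by have := ha i; positivity)
    _ = T ^ (p⁻¹ - 1) * ∑ i ∈ s, a i ^ (p - 1) * ‖L i‖ := by
        simp_rw [mul_assoc, ← Finset.mul_sum]
        field_simp
    _ ≤ T ^ (p⁻¹ - 1) * (T ^ (1 - p⁻¹) * (∑ i ∈ s, ‖L i‖ ^ p) ^ p⁻¹) := by
        gcongr
        exact sum_rpow_sub_one_mul_le s hp (fun i _ => (ha i).le) fun i _ => norm_nonneg _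
    _ = (∑ i ∈ s, ‖L i‖ ^ p) ^ p⁻¹ := by
        rw [← mul_assoc, ← Real.rpow_add hT]
        simp

theorem norm_fderiv_rpow_le (hp : 1 < p) (hδ : δ ≠ 0) (hs : s.Nonempty) {x : F}
    (hv : ∀ i ∈ s, DifferentiableAt ℝ (v i) x) :
    ‖fderiv ℝ (lpEnvelope p δ s v) x‖ ^ p ≤ ∑ i ∈ s, ‖fderiv ℝ (v i) x‖ ^ p := by
  have hp0 : 0 < p := by linarith
  calc ‖fderiv ℝ (lpEnvelope p δ s v) x‖ ^ p
      ≤ ((∑ i ∈ s, ‖fderiv ℝ (v i) x‖ ^ p) ^ p⁻¹) ^ p :=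
        Real.rpow_le_rpow (norm_nonneg _) (norm_fderiv_le hp hδ hs hv) hp0.le
    _ = _ := Real.rpow_inv_rpow (Finset.sum_nonneg fun i _ => by positivity) hp0.ne'

end lpEnvelope

def upperTail {X : Type*} (α : X → ℝ) (k : ℝ) : X → ℝ := {x | k ≤ α x}.indicator α

namespace upperTail

variable {X : Type*} {α : X → ℝ} {k : ℝ}

theorem eq_ite : upperTail α k = fun x => if k ≤ α x then α x else 0 := by
  ext x
  simp [upperTail, Set.indicator_apply]

theorem nonneg (hα : 0 ≤ α) (x : X) : 0 ≤ upperTail α k x :=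
  Set.indicator_nonneg (fun x _ => hα x) x

theorem le_self (hα : 0 ≤ α) (x : X) : upperTail α k x ≤ α x :=
  Set.indicator_le_self' (fun x _ => hα x) x

theorem antitone (hα : 0 ≤ α) (x : X) : Antitone fun k => upperTail α k x :=
  fun _ _ hk => Set.indicator_le_indicator_of_subset (fun _ hy => hk.trans hy) hα x

theorem eventually_eq_zero (x : X) : ∀ᶠ k in atTop, upperTail α k x = 0 := by
  filter_upwards [eventually_gt_atTop (α x)] with k hk
  exact Set.indicator_of_notMem (s := {x | k ≤ α x}) (not_le.2 hk) α

variable [MeasurableSpace X] {ν : Measure X}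

theorem integrable_mul (hα : Integrable α ν) {g : X → ℝ} (hg : MemLp g ∞ ν) :
    Integrable (fun x => upperTail α k x * g x) ν :=
  (hα.indicator₀ (nullMeasurableSet_le aemeasurable_const hα.aemeasurable)).mul_of_top_left hg

theorem integral_mul_le_integral_mul_abs (hα0 : 0 ≤ α) (hα : Integrable α ν) {K : ℝ}
    (hk : K ≤ k) {g : X → ℝ} (hg : MemLp g ∞ ν) :
    ∫ x, upperTail α k x * g x ∂ν ≤ ∫ x, upperTail α K x * |g x| ∂ν :=
  integral_mono (integrable_mul hα hg) (integrable_mul hα hg.abs) fun x =>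
    calc upperTail α k x * g x ≤ upperTail α k x * |g x| :=
          mul_le_mul_of_nonneg_left (le_abs_self _) (nonneg hα0 x)
      _ ≤ upperTail α K x * |g x| :=
          mul_le_mul_of_nonneg_right (antitone hα0 x hk) (abs_nonneg _)

theorem tendsto_integral_mul (hα0 : 0 ≤ α) (hα : Integrable α ν) {g : X → ℝ}
    (hg : MemLp g ∞ ν) :
    Tendsto (fun k => ∫ x, upperTail α k x * g x ∂ν) atTop (𝓝 0) := by
  have hlim := tendsto_integral_filter_of_dominated_convergence (l := atTop)
    (F := fun k x => upperTail α k x * g x) (f := 0) (fun x => ‖α x * g x‖)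
    (Eventually.of_forall fun k => (integrable_mul (k := k) hα hg).aestronglyMeasurable)
    (Eventually.of_forall fun k => Eventually.of_forall fun x => ?_)
    (hα.mul_of_top_left hg).norm
    (Eventually.of_forall fun x => (tendsto_const_nhds (x := (0 : ℝ))).congr' ?_)
  · simpa using hlim
  · rw [norm_mul, norm_mul, Real.norm_of_nonneg (nonneg hα0 x), Real.norm_of_nonneg (hα0 x)]
    exact mul_le_mul_of_nonneg_right (le_self hα0 x) (norm_nonneg _)
  · filter_upwards [eventually_eq_zero (α := α) x] with k hk
    rw [hk, zero_mul]

theorem sum_integral_sub_le (hα0 : 0 ≤ α) (hα : Integrable α ν) {K : ℕ → ℝ}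
    (hK : Monotone K) {J : ℕ} {g : ℕ → X → ℝ} {h : X → ℝ} (hg : ∀ i, MemLp (g i) ∞ ν)
    (hh : MemLp h ∞ ν) (hgh : ∀ i < J, ∀ x, g i x ≤ h x) (hh0 : 0 ≤ h) :
    ∑ i ∈ Finset.range J, (∫ x, upperTail α (K i) x * g i x ∂ν -
      ∫ x, upperTail α (K (i + 1)) x * g i x ∂ν) ≤ ∫ x, α x * h x ∂ν := by
  have hint : ∀ i k, Integrable (fun x => upperTail α k x * g i x) ν :=
    fun i k => integrable_mul hα (hg i)
  calc ∑ i ∈ Finset.range J, (∫ x, upperTail α (K i) x * g i x ∂ν -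
        ∫ x, upperTail α (K (i + 1)) x * g i x ∂ν)
      = ∫ x, ∑ i ∈ Finset.range J,
          (upperTail α (K i) x - upperTail α (K (i + 1)) x) * g i x ∂ν := by
        simp_rw [sub_mul]
        rw [integral_finsetSum _ fun i _ => ?_]
        · exact Finset.sum_congr rfl fun i _ => (integral_sub (hint i _) (hint i _)).symm
        · exact (hint i _).sub (hint i _)
    _ ≤ ∫ x, α x * h x ∂ν := by
        refine integral_mono (integrable_finsetSum _ fun i _ => ?_) (hα.mul_of_top_left hh)
          fun x => sum_sub_mul_le_mul ((antitone hα0 x).comp_monotone hK)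
            (nonneg hα0 x) (le_self hα0 x) (fun i hi => hgh i hi x) (hh0 x)
        simp_rw [sub_mul]
        exact (hint i _).sub (hint i _)

theorem exists_monotone_bands (hα0 : 0 ≤ α) (hα : Integrable α ν) {V : ℝ → X → ℝ}
    (hV : ∀ k, MemLp (V k) ∞ ν) {ε : ℝ} (hε0 : 0 < ε)
    (hε : ∀ k, ε < ∫ x, upperTail α k x * |V k x| ∂ν) :
    ∃ K : ℕ → ℝ, Monotone K ∧ ∀ i, ε / 2 ≤ ∫ x, upperTail α (K i) x * |V (K i) x| ∂ν -
      ∫ x, upperTail α (K (i + 1)) x * |V (K i) x| ∂ν := by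
  have hnext : ∀ k, ∃ k', k ≤ k' ∧ ∫ x, upperTail α k' x * |V k x| ∂ν ≤ ε / 2 := fun k =>
    (((tendsto_integral_mul hα0 hα (hV k).abs).eventually (ge_mem_nhds (half_pos hε0))).and
      (eventually_ge_atTop k)).exists.imp fun _ h => ⟨h.2, h.1⟩
  obtain ⟨K, hK, hKnext⟩ := exists_monotone_chain hnext
  exact ⟨K, hK, fun i => by linarith [hε (K i), hKnext i]⟩

end upperTail

def HasLpEnvelopes {X : Type*} (p : ℝ) (𝒱 : Set (X → ℝ)) : Prop :=
  ∀ J : ℕ, 0 < J → ∀ v : ℕ → X → ℝ, (∀ i < J, v i ∈ 𝒱) → ∀ δ > 0, ∃ w : X → ℝ,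
    (∀ i < J, ∀ x, |v i x| ≤ w x + δ) ∧ (fun x => (J : ℝ) ^ (-p⁻¹) * w x) ∈ 𝒱

theorem exists_integral_upperTail_mul_abs_le {X : Type*} [MeasurableSpace X] {ν : Measure X}
    {α : X → ℝ} {p M ε : ℝ} {𝒱 : Set (X → ℝ)} (hp : 1 < p) (hα0 : 0 ≤ α)
    (hα : Integrable α ν) (h𝒱 : ∀ v ∈ 𝒱, MemLp v ∞ ν) (henv : HasLpEnvelopes p 𝒱)
    (hM : ∀ v ∈ 𝒱, ∫ x, α x * v x ∂ν ≤ M) (hε : 0 < ε) :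
    ∃ K, ∀ v ∈ 𝒱, ∫ x, upperTail α K x * |v x| ∂ν ≤ ε := by
  by_contra! hbad
  choose V hV𝒱 hVbad using hbad
  obtain ⟨K, hK, hband⟩ :=
    upperTail.exists_monotone_bands hα0 hα (fun k => h𝒱 _ (hV𝒱 k)) hε hVbad
  set A := ∫ x, α x ∂ν
  have hA : 0 ≤ A := integral_nonneg hα0
  set δ := ε / (4 * (A + 1))
  have hAδ : A * δ ≤ ε / 4 := by
    rw [mul_div_assoc', div_le_div_iff₀ (by positivity) (by positivity)]
    nlinarith
  obtain ⟨J, hJ, hJ0⟩ :=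
    ((eventually_rpow_inv_mul_add_lt_mul hp M (ε / 4) (half_pos hε)).and
      (eventually_gt_atTop 0)).exists
  obtain ⟨w, hvw, hw𝒱⟩ := henv J hJ0 (fun i => V (K i)) (fun i _ => hV𝒱 _) δ (by positivity)
  set c : ℝ := (J : ℝ) ^ (-p⁻¹)
  have hc : 0 < c := Real.rpow_pos_of_pos (Nat.cast_pos.2 hJ0) _
  have hw : MemLp w ∞ ν := by
    simpa [hc.ne'] using (h𝒱 _ hw𝒱).const_mul c⁻¹
  have hαw : ∫ x, α x * w x ∂ν ≤ (J : ℝ) ^ p⁻¹ * M := by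
    have h := hM _ hw𝒱
    simp_rw [mul_left_comm (α _) c, integral_const_mul] at h
    rwa [← le_div_iff₀' hc, div_eq_inv_mul, ← Real.rpow_neg (Nat.cast_nonneg J), neg_neg] at h
  have hαwδ : ∫ x, α x * (w x + δ) ∂ν = ∫ x, α x * w x ∂ν + A * δ := by
    simp_rw [mul_add]
    rw [integral_add (f := fun x => α x * w x) (hα.mul_of_top_left hw) (hα.mul_const δ),
      integral_mul_const]
  have hupper := upperTail.sum_integral_sub_le hα0 hα hK (g := fun i x => |V (K i) x|)
    (h := fun x => w x + δ) (fun i => (h𝒱 _ (hV𝒱 (K i))).abs)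
    (hw.add (memLp_top_const δ)) hvw fun x => (abs_nonneg _).trans (hvw 0 hJ0 x)
  have hlower := Finset.card_nsmul_le_sum (Finset.range J) _ _ fun i _ => hband i
  rw [Finset.card_range, nsmul_eq_mul] at hlower
  linarith

section TestFunctions

variable {F : Type*} [NormedAddCommGroup F] [NormedSpace ℝ F] [MeasurableSpace F]
  {μ : Measure F} {p : ℝ} {Ω : Set F}

def unitTestFunctions (μ : Measure F) (p : ℝ) (Ω : Set F) : Set (F → ℝ) :=
  {v | ContDiff ℝ (⊤ : ℕ∞) v ∧ HasCompactSupport v ∧ tsupport v ⊆ Ω ∧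
    ∫ x in Ω, ‖fderiv ℝ v x‖ ^ p ∂μ ≤ 1}

theorem zero_mem_unitTestFunctions (hp : 0 < p) : (0 : F → ℝ) ∈ unitTestFunctions μ p Ω :=
  ⟨contDiff_const, HasCompactSupport.zero, by simp, by simp [Real.zero_rpow hp.ne']⟩

theorem memLp_top_of_mem_unitTestFunctions [OpensMeasurableSpace F] {v : F → ℝ}
    (hv : v ∈ unitTestFunctions μ p Ω) (ν : Measure F) : MemLp v ∞ ν :=
  hv.1.continuous.memLp_top_of_hasCompactSupport hv.2.1 ν

theorem integrable_norm_fderiv_rpow [OpensMeasurableSpace F] [IsFiniteMeasureOnCompacts μ]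
    (hp : 0 < p) {v : F → ℝ} (hv : ContDiff ℝ 1 v) (hvc : HasCompactSupport v) :
    Integrable (fun x => ‖fderiv ℝ v x‖ ^ p) μ :=
  ((hv.continuous_fderiv one_ne_zero).norm.rpow_const fun _ => Or.inr hp.le
    ).integrable_of_hasCompactSupport
    (hvc.fderiv (𝕜 := ℝ) |>.comp_left (g := fun L => ‖L‖ ^ p) (by simp [Real.zero_rpow hp.ne']))

theorem integral_norm_fderiv_const_mul_rpow {c : ℝ} (hc : 0 ≤ c) {w : F → ℝ}
    (hw : Differentiable ℝ w) :
    ∫ x in Ω, ‖fderiv ℝ (fun y => c * w y) x‖ ^ p ∂μ =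
      c ^ p * ∫ x in Ω, ‖fderiv ℝ w x‖ ^ p ∂μ := by
  simp_rw [fderiv_const_mul (hw _), norm_smul, Real.norm_of_nonneg hc,
    Real.mul_rpow hc (norm_nonneg _), integral_const_mul]

theorem integral_norm_fderiv_lpEnvelope_rpow_le [OpensMeasurableSpace F]
    [IsFiniteMeasureOnCompacts μ] (hp : 1 < p) {δ : ℝ} (hδ : δ ≠ 0) {ι : Type*}
    {s : Finset ι} (hs : s.Nonempty) {v : ι → F → ℝ}
    (hv : ∀ i ∈ s, v i ∈ unitTestFunctions μ p Ω) :
    ∫ x in Ω, ‖fderiv ℝ (lpEnvelope p δ s v) x‖ ^ p ∂μ ≤ s.card := by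
  have hp0 : 0 < p := by linarith
  have hsmooth : ∀ i ∈ s, ContDiff ℝ 1 (v i) := fun i hi => (hv i hi).1.of_le (by simp)
  have hint : ∀ i ∈ s, Integrable (fun x => ‖fderiv ℝ (v i) x‖ ^ p) (μ.restrict Ω) :=
    fun i hi => (integrable_norm_fderiv_rpow hp0 (hsmooth i hi) (hv i hi).2.1).restrict
  calc ∫ x in Ω, ‖fderiv ℝ (lpEnvelope p δ s v) x‖ ^ p ∂μ
      ≤ ∫ x in Ω, ∑ i ∈ s, ‖fderiv ℝ (v i) x‖ ^ p ∂μ :=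
        integral_mono
          (integrable_norm_fderiv_rpow hp0 (lpEnvelope.contDiff hδ hs hsmooth)
            (lpEnvelope.hasCompactSupport fun i hi => (hv i hi).2.1)).restrict
          (integrable_finsetSum _ hint) fun x => lpEnvelope.norm_fderiv_rpow_le hp hδ hs
            fun i hi => ((hsmooth i hi).differentiable one_ne_zero) x
    _ = ∑ i ∈ s, ∫ x in Ω, ‖fderiv ℝ (v i) x‖ ^ p ∂μ := integral_finsetSum _ hint
    _ ≤ ∑ _i ∈ s, (1 : ℝ) := Finset.sum_le_sum fun i hi => (hv i hi).2.2.2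
    _ = s.card := by simp

theorem hasLpEnvelopes_unitTestFunctions [OpensMeasurableSpace F] [IsFiniteMeasureOnCompacts μ]
    (hp : 1 < p) : HasLpEnvelopes p (unitTestFunctions μ p Ω) := by
  intro J hJ v hv δ hδ
  have hp0 : 0 < p := by linarith
  have hJpos : (0 : ℝ) < J := Nat.cast_pos.2 hJ
  have hs : (Finset.range J).Nonempty := Finset.nonempty_range_iff.2 hJ.ne'
  have hv' : ∀ i ∈ Finset.range J, v i ∈ unitTestFunctions μ p Ω :=
    fun i hi => hv i (Finset.mem_range.1 hi)
  set δ' := δ / (J : ℝ) ^ p⁻¹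
  have hδ' : 0 < δ' := by positivity
  set w := lpEnvelope p δ' (Finset.range J) v
  have hw : ContDiff ℝ (⊤ : ℕ∞) w := lpEnvelope.contDiff hδ'.ne' hs fun i hi => (hv' i hi).1
  refine ⟨w, fun i hi x => ?_, contDiff_const.mul hw,
    (lpEnvelope.hasCompactSupport fun i hi => (hv' i hi).2.1).mul_left,
    tsupport_mul_subset_right.trans
      (lpEnvelope.tsupport_subset.trans (iUnion₂_subset fun i hi => (hv' i hi).2.2.1)), ?_⟩
  · have h := lpEnvelope.abs_le_add (δ := δ') hp0 (Finset.mem_range.2 hi) x (v := v)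
    rwa [Finset.card_range, abs_of_pos hδ', mul_div_cancel₀ _ (by positivity)] at h
  · rw [integral_norm_fderiv_const_mul_rpow (by positivity) (hw.differentiable (by simp))]
    calc ((J : ℝ) ^ (-p⁻¹)) ^ p * ∫ x in Ω, ‖fderiv ℝ w x‖ ^ p ∂μ
        ≤ ((J : ℝ) ^ (-p⁻¹)) ^ p * J := by
          gcongr
          simpa using integral_norm_fderiv_lpEnvelope_rpow_le hp hδ'.ne' hs hv'
      _ = 1 := by
          rw [← Real.rpow_mul hJpos.le, neg_mul, inv_mul_cancel₀ hp0.ne', Real.rpow_neg_one,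
            inv_mul_cancel₀ hJpos.ne']

end TestFunctions

theorem norm_gradient_eq_norm_fderiv {F : Type*} [NormedAddCommGroup F] [InnerProductSpace ℝ F]
    [CompleteSpace F] (f : F → ℝ) (x : F) : ‖gradient f x‖ = ‖fderiv ℝ f x‖ :=
  (InnerProductSpace.toDual ℝ F).symm.norm_map _

section DualNorm

variable {N : ℕ} {p : ℝ} {Ω : Set (EuclideanSpace ℝ (Fin N))}
  {f : EuclideanSpace ℝ (Fin N) → ℝ}

theorem dualNorm_eq_sSup_image :
    dualNorm p Ω f = sSup ((fun v => ∫ x in Ω, f x * v x) '' unitTestFunctions volume p Ω) := by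
  simp only [dualNorm, unitTestFunctions, norm_gradient_eq_norm_fderiv, Set.image,
    Set.mem_ofPred_eq, and_assoc, eq_comm]

theorem dualNorm_nonneg (hp : 0 < p) : 0 ≤ dualNorm p Ω f :=
  dualNorm_eq_sSup_image ▸ Real.sSup_nonneg' ⟨0, ⟨0, zero_mem_unitTestFunctions hp, by simp⟩, le_rfl⟩

theorem dualNorm_le {c : ℝ} (hc : 0 ≤ c)
    (h : ∀ v ∈ unitTestFunctions volume p Ω, ∫ x in Ω, f x * v x ≤ c) : dualNorm p Ω f ≤ c :=
  dualNorm_eq_sSup_image ▸ Real.sSup_le (by rintro _ ⟨v, hv, rfl⟩; exact h v hv) hc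

end DualNorm

theorem dualNorm_truncation_tendsto_zero_general {N : ℕ} (p : ℝ) (hp : 1 < p)
    (Ω : Set (EuclideanSpace ℝ (Fin N)))
    (α₂ : EuclideanSpace ℝ (Fin N) → ℝ)
    (hpos : ∀ x, 0 ≤ α₂ x)
    -- `α₂ ∈ L¹(Ω)`
    (hL1 : Integrable α₂ (volume.restrict Ω))
    -- `α₂ ∈ W^{-1,p'}(Ω)`: its action on test functions is bounded in the dual norm
    (hdual : ∃ M : ℝ, ∀ v : EuclideanSpace ℝ (Fin N) → ℝ,
      ContDiff ℝ (⊤ : ℕ∞) v → HasCompactSupport v → tsupport v ⊆ Ω →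
      (∫ x in Ω, ‖gradient v x‖ ^ p) ≤ 1 → (∫ x in Ω, α₂ x * v x) ≤ M) :
    Tendsto (fun k : ℝ =>
        dualNorm p Ω (fun x => if k ≤ α₂ x then α₂ x else 0))
      atTop (nhds 0) := by
  obtain ⟨M, hM⟩ := hdual
  have hp0 : 0 < p := by linarith
  have hbound : ∀ v ∈ unitTestFunctions volume p Ω, ∫ x in Ω, α₂ x * v x ≤ M :=
    fun v ⟨hv, hvc, hvΩ, hvp⟩ => hM v hv hvc hvΩ (by simpa [norm_gradient_eq_norm_fderiv] using hvp)
  simp_rw [← upperTail.eq_ite]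
  rw [Metric.tendsto_atTop]
  intro ε hε
  obtain ⟨K, hK⟩ := exists_integral_upperTail_mul_abs_le hp hpos hL1
    (fun v hv => memLp_top_of_mem_unitTestFunctions hv _) (hasLpEnvelopes_unitTestFunctions hp)
    hbound (half_pos hε)
  refine ⟨K, fun k hk => ?_⟩
  rw [Real.dist_0_eq_abs, abs_of_nonneg (dualNorm_nonneg hp0)]
  refine (dualNorm_le (half_pos hε).le fun v hv => ?_).trans_lt (half_lt_self hε)
  exact (upperTail.integral_mul_le_integral_mul_abs hpos hL1 hk
    (memLp_top_of_mem_unitTestFunctions hv _)).trans (hK v hv)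

theorem dualNorm_truncation_tendsto_zero {N : ℕ} (p : ℝ) (hp : 1 < p) (hpN : p ≤ N)
    (Ω : Set (EuclideanSpace ℝ (Fin N))) (hΩo : IsOpen Ω) (hΩb : Bornology.IsBounded Ω)
    (α₂ : EuclideanSpace ℝ (Fin N) → ℝ)
    (hpos : ∀ x, 0 ≤ α₂ x)
    -- `α₂ ∈ L¹(Ω)`
    (hL1 : Integrable α₂ (volume.restrict Ω))
    -- `α₂ ∈ W^{-1,p'}(Ω)`: its action on test functions is bounded in the dual norm
    (hdual : ∃ M : ℝ, ∀ v : EuclideanSpace ℝ (Fin N) → ℝ,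
      ContDiff ℝ (⊤ : ℕ∞) v → HasCompactSupport v → tsupport v ⊆ Ω →
      (∫ x in Ω, ‖gradient v x‖ ^ p) ≤ 1 → (∫ x in Ω, α₂ x * v x) ≤ M) :
    Tendsto (fun k : ℝ =>
        dualNorm p Ω (fun x => if k ≤ α₂ x then α₂ x else 0))
      atTop (nhds 0) :=
  dualNorm_truncation_tendsto_zero_general p hp Ω α₂ hpos hL1 hdual

end
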